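/- arXiv:2304.05007 — 2 statements merged into one kernel-verified Lean document; each statement's English description precedes it below -/
import Mathlib

section
/- Let n ≥ 1 be an integer, p > 1, q ≥ 1, and β, β' reals with 0 < β' ≤ β ≤ (p−1)/(p+1) and 2pβ/((p−1)q) ≤ 1. Let g : ℕ×ℕ → PMF(ℕ×ℕ) be the binomial thinning kernel sending (d, e) to the law of (Binomial(d, β'/β), Binomial(e, β'/β)) with the two binomial draws independent. Then the pushforward of P^q_{β,p} under g (i.e., P^q_{β,p} composed with g via monadic bind) equals P^q_{β',p}, and the pushforward of Q^q_{β,p} under g equals Q^q_{β',p}. -/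
open scoped ENNReal
open Finset

noncomputable section

/-- Clamp a real number into an `ℝ≥0∞` probability (identity on `[0,1]`). -/
def prob (x : ℝ) : ℝ≥0∞ := min (ENNReal.ofReal x) 1

lemma prob_le_one (x : ℝ) : prob x ≤ 1 := min_le_right _ _

/-- Hockey-stick divergence `D_γ(P‖Q) = ∑_y max 0 (P y − γ·Q y)`. -/
def hsDiv {Y : Type*} (P Q : PMF Y) (γ : ℝ) : ℝ :=
  ∑' y, max 0 ((P y).toReal - γ * (Q y).toReal)

/-- The shuffle of a list of PMFs: sample independently and return the multiset of results. -/
def shuffle {Y : Type*} : List (PMF Y) → PMF (Multiset Y)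
  | [] => PMF.pure 0
  | μ :: μs => μ.bind fun y => (shuffle μs).map fun s => y ::ₘ s

/-- Binomial law on ℕ with `m` trials and success probability `θ` (a real, clamped). -/
def binomN (θ : ℝ) (m : ℕ) : PMF ℕ :=
  (PMF.binomial (prob θ).toNNReal
    (by simpa using ENNReal.toNNReal_mono ENNReal.one_ne_top (prob_le_one θ)) m).map Fin.val

/-- Three-point distribution on `Fin 3` with weights `w1, w2, 1 − w1 − w2` (clamped). -/
def triR (w1 w2 : ℝ) : PMF (Fin 3) :=
  PMF.ofFintype
    ![prob w1, min (prob w2) (1 - prob w1),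
      1 - (prob w1 + min (prob w2) (1 - prob w1))]
    (by
      have h : prob w1 + min (prob w2) (1 - prob w1) ≤ 1 := by
        calc prob w1 + min (prob w2) (1 - prob w1)
            ≤ prob w1 + (1 - prob w1) := by gcongr; exact min_le_right _ _
          _ = 1 := add_tsub_cancel_of_le (prob_le_one w1)
      simp only [Fin.sum_univ_three, Matrix.cons_val_zero, Matrix.cons_val_one,
        Matrix.head_cons, Matrix.cons_val_two, Matrix.tail_cons]
      exact add_tsub_cancel_of_le h)

/-- Law of `(A+Δ₁, C−A+Δ₂)` where `C ~ Binomial(m, θC)`, `A ~ Binomial(C, θA)`, and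
`(Δ₁,Δ₂)` equals `(1,0)` w.p. `w1`, `(0,1)` w.p. `w2`, `(0,0)` otherwise. -/
def lawP (m : ℕ) (θC θA w1 w2 : ℝ) : PMF (ℕ × ℕ) :=
  (binomN θC m).bind fun c =>
    (binomN θA c).bind fun a =>
      (triR w1 w2).map fun d =>
        if d = 0 then (a + 1, c - a) else if d = 1 then (a, c - a + 1) else (a, c - a)

/-- Law of `(A+Δ₂, C−A+Δ₁)` for the same sampling process. -/
def lawQ (m : ℕ) (θC θA w1 w2 : ℝ) : PMF (ℕ × ℕ) :=
  (binomN θC m).bind fun c =>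
    (binomN θA c).bind fun a =>
      (triR w1 w2).map fun d =>
        if d = 0 then (a, c - a + 1) else if d = 1 then (a + 1, c - a) else (a, c - a)

/-- `P^q_{β,p}` with `n` users: `α = β/(p−1)`, `r = pα/q`, `C ~ Binomial(n−1, 2r)`,
`A ~ Binomial(C, 1/2)`. -/
def Pq (n : ℕ) (p β q : ℝ) : PMF (ℕ × ℕ) :=
  lawP (n - 1) (2 * (p * (β / (p - 1)) / q)) (1 / 2) (p * (β / (p - 1))) (β / (p - 1))

/-- `Q^q_{β,p}`. -/
def Qq (n : ℕ) (p β q : ℝ) : PMF (ℕ × ℕ) :=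
  lawQ (n - 1) (2 * (p * (β / (p - 1)) / q)) (1 / 2) (p * (β / (p - 1))) (β / (p - 1))

/-- `CDF_{c,θ}[c₁,c₂] = ∑_{c₁ ≤ i ≤ c₂, 0 ≤ i ≤ c} C(c,i) θ^i (1−θ)^{c−i}`. -/
def binCDF (c : ℕ) (θ : ℝ) (c1 c2 : ℝ) : ℝ :=
  ∑ i ∈ Finset.range (c + 1),
    if c1 ≤ (i : ℝ) ∧ (i : ℝ) ≤ c2 then (c.choose i : ℝ) * θ ^ i * (1 - θ) ^ (c - i) else 0

/-- Expectation of `f` under `Binomial(m, θ)`. -/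
def binExp (m : ℕ) (θ : ℝ) (f : ℕ → ℝ) : ℝ :=
  ∑ c ∈ Finset.range (m + 1), (m.choose c : ℝ) * θ ^ c * (1 - θ) ^ (m - c) * f c

/-- The `(p, β)`-variation property of the first randomizer. -/
def VariationProp {X Y : Type*} (R1 : X → PMF Y) (p β : ℝ) : Prop :=
  ∀ x x' : X, (∀ y, (R1 x y).toReal ≤ p * (R1 x' y).toReal) ∧ hsDiv (R1 x) (R1 x') 1 ≤ β

/-- The `q`-ratio property of the first randomizer w.r.t. the others. -/
def RatioProp {X Y : Type*} {m : ℕ} (R1 : X → PMF Y) (R : Fin m → X → PMF Y) (q : ℝ) : Prop :=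
  ∀ (i : Fin m) (x x' : X) (y : Y), (R1 x y).toReal ≤ q * (R i x' y).toReal


/-!
Thinning both coordinates independently with rate `t` sends the law of a sum of independent
vectors to the convolution of their thinned laws, i.e. the thinning kernel is a homomorphism for
convolution; so are `c ↦ Bin(c, θ)` and the split `c ↦ (A, c - A)` with `A ~ Bin(c, h)`. Two such
homomorphisms out of `ℕ` agree as soon as they agree at `1`, which gives `Bin(Bin(m, θ), t) =
Bin(m, θt)` and shows that splitting and then thinning is the same as thinning `c` and then
splitting. Now `P^q_{β,p}` is the convolution of the split of `C ~ Bin(n - 1, 2r)` with the law of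
`(Δ₁, Δ₂)`, and thinning `(Δ₁, Δ₂)` multiplies its weights `pα`, `α` by `t`. For `t = β'/β` this
rescales `r` and `α` exactly as replacing `β` by `β'` does; the same holds for `Q^q_{β,p}`.
-/

theorem ENNReal.one_sub_mul_eq {p q : ℝ≥0∞} (hp : p ≤ 1) (hq : q ≤ 1) :
    1 - p * q = (1 - p) + p * (1 - q) := by
  have hp_top : p ≠ ⊤ := ne_top_of_le_ne_top ENNReal.one_ne_top hp
  rw [ENNReal.mul_sub (fun _ _ => hp_top), mul_one,
    tsub_add_tsub_cancel hp (mul_le_of_le_one_right' hq)]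

theorem prob_of_le_one {x : ℝ} (hx : x ≤ 1) : prob x = ENNReal.ofReal x :=
  min_eq_left (ENNReal.ofReal_le_one.mpr hx)

theorem prob_mul {x y : ℝ} (hx : x ≤ 1) (hy : 0 ≤ y) (hy1 : y ≤ 1) :
    prob (x * y) = prob x * prob y := by
  have hxy : x * y ≤ 1 := by
    rcases le_total x 0 with h | h
    · nlinarith
    · exact mul_le_one₀ hx hy hy1
  rw [prob_of_le_one hxy, prob_of_le_one hx, prob_of_le_one hy1, ENNReal.ofReal_mul' hy]

theorem prob_add_prob_le_one {x y : ℝ} (hx : 0 ≤ x) (hy : 0 ≤ y) (hxy : x + y ≤ 1) :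
    prob x + prob y ≤ 1 := by
  rw [prob_of_le_one (by linarith), prob_of_le_one (by linarith), ← ENNReal.ofReal_add hx hy]
  exact ENNReal.ofReal_le_one.mpr hxy

namespace PMF

variable {α β M N L : Type*}

theorem bind_congr_of_support (p : PMF α) {f g : α → PMF β}
    (h : ∀ a ∈ p.support, f a = g a) : p.bind f = p.bind g :=
  PMF.ext fun b => tsum_congr fun a => by
    by_cases ha : p a = 0
    · simp [ha]
    · rw [h a ha]

def conv [Add M] (μ ν : PMF M) : PMF M := μ.bind fun x => ν.map (x + ·)

structure IsConvHom [AddZeroClass M] [AddZeroClass N] (κ : M → PMF N) : Prop where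
  map_zero : κ 0 = pure 0
  map_add : ∀ u v, κ (u + v) = conv (κ u) (κ v)

theorem IsConvHom.conv_bind [AddZeroClass M] [AddZeroClass N] {κ : M → PMF N}
    (hκ : IsConvHom κ) (μ ν : PMF M) :
    (conv μ ν).bind κ = conv (μ.bind κ) (ν.bind κ) := by
  simp only [conv, bind_bind, bind_map, map_bind, Function.comp_def, hκ.map_add]
  congr 1; funext x
  exact bind_comm _ _ _

theorem IsConvHom.bind [AddZeroClass M] [AddZeroClass N] [AddZeroClass L] {κ : M → PMF N}
    {ρ : N → PMF L} (hκ : IsConvHom κ) (hρ : IsConvHom ρ) :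
    IsConvHom fun u => (κ u).bind ρ where
  map_zero := by rw [hκ.map_zero, pure_bind, hρ.map_zero]
  map_add u v := by rw [hκ.map_add, hρ.conv_bind]

theorem IsConvHom.ext_nat [AddZeroClass N] {κ ρ : ℕ → PMF N} (hκ : IsConvHom κ)
    (hρ : IsConvHom ρ) (h : κ 1 = ρ 1) : κ = ρ := by
  funext m
  induction m with
  | zero => rw [hκ.map_zero, hρ.map_zero]
  | succ m ih => rw [hκ.map_add, hρ.map_add, ih, h]

theorem conv_apply_nat (μ ν : PMF ℕ) (k : ℕ) :
    conv μ ν k = ∑ ij ∈ antidiagonal k, μ ij.1 * ν ij.2 := by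
  have hmap : ∀ x, (ν.map (x + ·)) k = if x ≤ k then ν (k - x) else 0 := by
    intro x
    rw [map_apply]
    split_ifs with hx
    · rw [tsum_eq_single (k - x), if_pos (by omega)]
      exact fun y hy => if_neg (by omega)
    · exact ENNReal.tsum_eq_zero.mpr fun y => if_neg (by omega)
  rw [conv, bind_apply, Finset.Nat.sum_antidiagonal_eq_sum_range_succ_mk,
    tsum_eq_sum (s := range (k + 1)) fun x hx => by
      rw [hmap, if_neg (by simpa [Nat.lt_succ_iff] using hx), mul_zero]]
  refine sum_congr rfl fun x hx => ?_
  rw [hmap, if_pos (by simpa [Nat.lt_succ_iff] using hx)]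

end PMF

open PMF (IsConvHom)

theorem binomN_apply (θ : ℝ) (m k : ℕ) :
    binomN θ m k = m.choose k * prob θ ^ k * (1 - prob θ) ^ (m - k) := by
  have hθ : ((prob θ).toNNReal : ℝ≥0∞) = prob θ :=
    ENNReal.coe_toNNReal (ne_top_of_le_ne_top ENNReal.one_ne_top (prob_le_one θ))
  rw [binomN, PMF.map_apply]
  by_cases hk : k ≤ m
  · rw [tsum_eq_single (⟨k, Nat.lt_succ_of_le hk⟩ : Fin (m + 1))]
    · rw [if_pos rfl]
      refine (PMF.binomial_apply _ _ _ _).trans ?_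
      simp only [hθ, Fin.val_last]
      ring
    · intro i hi
      exact if_neg fun h => hi (Fin.ext h.symm)
  · rw [Nat.choose_eq_zero_of_lt (not_le.mp hk), Nat.cast_zero, zero_mul, zero_mul]
    exact ENNReal.tsum_eq_zero.mpr fun i => if_neg fun h => hk (by have := i.isLt; omega)

theorem le_of_mem_support_binomN {θ : ℝ} {m k : ℕ} (hk : k ∈ (binomN θ m).support) : k ≤ m := by
  by_contra h
  exact hk (by rw [binomN_apply, Nat.choose_eq_zero_of_lt (not_le.mp h)]; simp)

theorem binomN_one_bind_apply {α : Type*} (θ : ℝ) (f : ℕ → PMF α) (z : α) :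
    ((binomN θ 1).bind f) z = (1 - prob θ) * f 0 z + prob θ * f 1 z := by
  rw [PMF.bind_apply, tsum_eq_sum (s := range 2) fun x hx => by
    rw [binomN_apply, Nat.choose_eq_zero_of_lt (by simpa using hx)]; simp]
  simp [Finset.sum_range_succ, binomN_apply]

theorem sum_antidiagonal_choose_mul_pow {R : Type*} [CommSemiring R] (p q : R) (a b k : ℕ) :
    ∑ ij ∈ antidiagonal k, (a.choose ij.1 * p ^ ij.1 * q ^ (a - ij.1)) *
      (b.choose ij.2 * p ^ ij.2 * q ^ (b - ij.2)) =
      (a + b).choose k * p ^ k * q ^ (a + b - k) := by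
  rw [Nat.add_choose_eq, Nat.cast_sum, sum_mul, sum_mul]
  refine sum_congr rfl fun ij hij => ?_
  rw [HasAntidiagonal.mem_antidiagonal] at hij
  by_cases hle : ij.1 ≤ a ∧ ij.2 ≤ b
  · have hexp : a + b - k = (a - ij.1) + (b - ij.2) := by omega
    rw [hexp, ← hij, pow_add, pow_add]
    push_cast
    ring
  · rcases not_and_or.mp hle with h | h <;>
      simp [Nat.choose_eq_zero_of_lt (not_le.mp h)]

theorem isConvHom_binomN (θ : ℝ) : IsConvHom (binomN θ) where
  map_zero := by
    ext k
    rcases k with _ | k <;> simp [binomN_apply]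
  map_add a b := by
    ext k
    rw [PMF.conv_apply_nat, binomN_apply, ← sum_antidiagonal_choose_mul_pow]
    simp only [binomN_apply]

theorem binomN_bind_binomN {θ τ : ℝ} (hθ : θ ≤ 1) (hτ : 0 ≤ τ) (hτ1 : τ ≤ 1) (m : ℕ) :
    (binomN θ m).bind (binomN τ) = binomN (θ * τ) m := by
  refine congrFun ((isConvHom_binomN θ).bind (isConvHom_binomN τ)
    |>.ext_nat (isConvHom_binomN (θ * τ)) ?_) m
  ext k
  rw [binomN_one_bind_apply, (isConvHom_binomN τ).map_zero, binomN_apply, binomN_apply,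
    prob_mul hθ hτ hτ1]
  rcases k with _ | _ | k
  · simp [ENNReal.one_sub_mul_eq (prob_le_one θ) (prob_le_one τ)]
  · simp
  · simp [Nat.choose_eq_zero_of_lt]

def binSplit (h : ℝ) (c : ℕ) : PMF (ℕ × ℕ) := (binomN h c).map fun a => (a, c - a)

def thin (t : ℝ) (v : ℕ × ℕ) : PMF (ℕ × ℕ) :=
  (binomN t v.1).bind fun a => (binomN t v.2).map fun b => (a, b)

theorem isConvHom_binSplit (h : ℝ) : IsConvHom (binSplit h) where
  map_zero := by rw [binSplit, (isConvHom_binomN h).map_zero, PMF.pure_map]; rfl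
  map_add a b := by
    simp only [binSplit, (isConvHom_binomN h).map_add, PMF.conv, PMF.map_bind, PMF.bind_map,
      PMF.map_comp]
    refine PMF.bind_congr_of_support _ fun x hx => PMF.bind_congr_of_support _ fun y hy => ?_
    have hxa := le_of_mem_support_binomN hx
    have hyb := le_of_mem_support_binomN hy
    simp only [Function.comp_apply, Prod.mk_add_mk]
    congr 2
    omega

theorem isConvHom_thin (t : ℝ) : IsConvHom (thin t) where
  map_zero := by
    simp only [thin, Prod.fst_zero, Prod.snd_zero, (isConvHom_binomN t).map_zero, PMF.pure_bind,
      PMF.pure_map]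
    rfl
  map_add u v := by
    simp only [thin, Prod.fst_add, Prod.snd_add, (isConvHom_binomN t).map_add, PMF.conv,
      PMF.bind_bind, PMF.bind_map, PMF.map_bind, PMF.map_comp, Function.comp_def]
    exact congrArg _ (funext fun x => PMF.bind_comm _ _ _)

theorem thin_eq_map_smul (t : ℝ) {v : ℕ × ℕ} (hv : v.1 + v.2 ≤ 1) :
    thin t v = (binomN t 1).map (· • v) := by
  obtain ⟨a, b⟩ := v
  simp only at hv
  have ha : a ≤ 1 := by omega
  have hb : b ≤ 1 := by omega
  interval_cases a <;> interval_cases b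
  · rw [show ((0 : ℕ), (0 : ℕ)) = 0 from rfl, (isConvHom_thin t).map_zero]
    exact (PMF.map_const _ _).symm
  · simp [thin, (isConvHom_binomN t).map_zero]
  · simp [thin, (isConvHom_binomN t).map_zero, PMF.pure_map]
    rfl
  · omega

theorem thin_apply_of_add_le_one (t : ℝ) {v : ℕ × ℕ} (hv : v.1 + v.2 ≤ 1) (z : ℕ × ℕ) :
    thin t v z = (1 - prob t) * PMF.pure 0 z + prob t * PMF.pure v z := by
  rw [thin_eq_map_smul t hv, ← PMF.bind_pure_comp, binomN_one_bind_apply]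
  simp

theorem binSplit_bind_thin (h t : ℝ) (c : ℕ) :
    (binSplit h c).bind (thin t) = (binomN t c).bind (binSplit h) := by
  refine congrFun ((isConvHom_binSplit h).bind (isConvHom_thin t)
    |>.ext_nat ((isConvHom_binomN t).bind (isConvHom_binSplit h)) ?_) c
  ext z
  rw [binSplit, PMF.bind_map, binomN_one_bind_apply, binomN_one_bind_apply,
    (isConvHom_binSplit h).map_zero, binSplit, ← PMF.bind_pure_comp, binomN_one_bind_apply]
  simp only [Function.comp_apply, Nat.sub_zero, Nat.sub_self]
  rw [thin_apply_of_add_le_one t (by simp), thin_apply_of_add_le_one t (by simp)]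
  calc _ = (1 - prob h + prob h) * ((1 - prob t) * PMF.pure (0 : ℕ × ℕ) z) +
        prob t * ((1 - prob h) * PMF.pure (0, 1) z + prob h * PMF.pure (1, 0) z) := by ring
    _ = _ := by rw [tsub_add_cancel_of_le (prob_le_one h), one_mul]

theorem triR_bind_apply {α : Type*} {w1 w2 : ℝ} (hw : prob w1 + prob w2 ≤ 1)
    (f : Fin 3 → PMF α) (z : α) :
    ((triR w1 w2).bind f) z =
      prob w1 * f 0 z + prob w2 * f 1 z + (1 - (prob w1 + prob w2)) * f 2 z := by
  have hmin : min (prob w2) (1 - prob w1) = prob w2 :=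
    min_eq_left (ENNReal.le_sub_of_add_le_left
      (ne_top_of_le_ne_top ENNReal.one_ne_top (prob_le_one w1)) hw)
  rw [PMF.bind_apply, tsum_fintype, Fin.sum_univ_three]
  simp [triR, hmin]

theorem triR_map_bind_thin {w1 w2 t : ℝ} (hw1 : 0 ≤ w1) (hw2 : 0 ≤ w2) (hw : w1 + w2 ≤ 1)
    (ht : 0 ≤ t) (ht1 : t ≤ 1) {δ : Fin 3 → ℕ × ℕ} (hδ : ∀ i, (δ i).1 + (δ i).2 ≤ 1)
    (hδ2 : δ 2 = 0) :
    ((triR w1 w2).map δ).bind (thin t) = (triR (w1 * t) (w2 * t)).map δ := by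
  have hwt : prob (w1 * t) + prob (w2 * t) ≤ 1 :=
    prob_add_prob_le_one (mul_nonneg hw1 ht) (mul_nonneg hw2 ht) (by nlinarith)
  ext z
  rw [PMF.bind_map, ← PMF.bind_pure_comp, triR_bind_apply (prob_add_prob_le_one hw1 hw2 hw),
    triR_bind_apply hwt]
  simp only [Function.comp_apply, thin_apply_of_add_le_one t (hδ _), hδ2,
    (isConvHom_thin t).map_zero]
  rw [prob_mul (by linarith) ht ht1, prob_mul (by linarith) ht ht1, ← add_mul,
    ENNReal.one_sub_mul_eq (prob_add_prob_le_one hw1 hw2 hw) (prob_le_one t)]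
  ring

theorem lawP_eq_conv (m : ℕ) (θC θA w1 w2 : ℝ) :
    lawP m θC θA w1 w2 = PMF.conv ((binomN θC m).bind (binSplit θA))
      ((triR w1 w2).map ![(1, 0), (0, 1), (0, 0)]) := by
  simp only [lawP, PMF.conv, binSplit, PMF.bind_bind, PMF.bind_map, PMF.map_comp]
  refine congrArg _ (funext fun c => congrArg _ (funext fun a => ?_))
  refine congrArg (PMF.map · _) (funext fun d => ?_)
  fin_cases d <;> rfl

theorem lawQ_eq_conv (m : ℕ) (θC θA w1 w2 : ℝ) :
    lawQ m θC θA w1 w2 = PMF.conv ((binomN θC m).bind (binSplit θA))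
      ((triR w1 w2).map ![(0, 1), (1, 0), (0, 0)]) := by
  simp only [lawQ, PMF.conv, binSplit, PMF.bind_bind, PMF.bind_map, PMF.map_comp]
  refine congrArg _ (funext fun c => congrArg _ (funext fun a => ?_))
  refine congrArg (PMF.map · _) (funext fun d => ?_)
  fin_cases d <;> rfl

theorem conv_binSplit_triR_bind_thin {θ w1 w2 t : ℝ} (hθ : θ ≤ 1) (hw1 : 0 ≤ w1) (hw2 : 0 ≤ w2)
    (hw : w1 + w2 ≤ 1) (ht : 0 ≤ t) (ht1 : t ≤ 1) (m : ℕ) (h : ℝ) {δ : Fin 3 → ℕ × ℕ}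
    (hδ : ∀ i, (δ i).1 + (δ i).2 ≤ 1) (hδ2 : δ 2 = 0) :
    (PMF.conv ((binomN θ m).bind (binSplit h)) ((triR w1 w2).map δ)).bind (thin t) =
      PMF.conv ((binomN (θ * t) m).bind (binSplit h)) ((triR (w1 * t) (w2 * t)).map δ) := by
  rw [(isConvHom_thin t).conv_bind, PMF.bind_bind, funext (binSplit_bind_thin h t),
    ← PMF.bind_bind, binomN_bind_binomN hθ ht ht1, triR_map_bind_thin hw1 hw2 hw ht ht1 hδ hδ2]

theorem lawP_bind_thin {θ w1 w2 t : ℝ} (hθ : θ ≤ 1) (hw1 : 0 ≤ w1) (hw2 : 0 ≤ w2)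
    (hw : w1 + w2 ≤ 1) (ht : 0 ≤ t) (ht1 : t ≤ 1) (m : ℕ) (h : ℝ) :
    (lawP m θ h w1 w2).bind (thin t) = lawP m (θ * t) h (w1 * t) (w2 * t) := by
  rw [lawP_eq_conv, lawP_eq_conv,
    conv_binSplit_triR_bind_thin hθ hw1 hw2 hw ht ht1 m h (by decide) rfl]

theorem lawQ_bind_thin {θ w1 w2 t : ℝ} (hθ : θ ≤ 1) (hw1 : 0 ≤ w1) (hw2 : 0 ≤ w2)
    (hw : w1 + w2 ≤ 1) (ht : 0 ≤ t) (ht1 : t ≤ 1) (m : ℕ) (h : ℝ) :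
    (lawQ m θ h w1 w2).bind (thin t) = lawQ m (θ * t) h (w1 * t) (w2 * t) := by
  rw [lawQ_eq_conv, lawQ_eq_conv,
    conv_binSplit_triR_bind_thin hθ hw1 hw2 hw ht ht1 m h (by decide) rfl]

theorem stmt6_general (n : ℕ) (p q β β' : ℝ) (hp : 1 < p)
    (hβ'0 : 0 < β') (hβ'β : β' ≤ β) (hβ : β ≤ (p - 1) / (p + 1))
    (hr : 2 * p * β / ((p - 1) * q) ≤ 1) :
    (Pq n p β q).bind (fun de =>
        (binomN (β' / β) de.1).bind fun a => (binomN (β' / β) de.2).map fun b => (a, b)) =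
      Pq n p β' q ∧
    (Qq n p β q).bind (fun de =>
        (binomN (β' / β) de.1).bind fun a => (binomN (β' / β) de.2).map fun b => (a, b)) =
      Qq n p β' q := by
  have hβ0 : 0 < β := hβ'0.trans_le hβ'β
  have hp1 : 0 < p - 1 := by linarith
  have ht : 0 ≤ β' / β := by positivity
  have ht1 : β' / β ≤ 1 := div_le_one_of_le₀ hβ'β hβ0.le
  have hθ : 2 * (p * (β / (p - 1)) / q) ≤ 1 := by
    rw [div_mul_eq_div_div] at hr
    convert hr using 1
    ring
  have hw : p * (β / (p - 1)) + β / (p - 1) ≤ 1 := by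
    rw [le_div_iff₀ (by linarith)] at hβ
    rw [← add_one_mul, mul_div_assoc', div_le_one hp1]
    linarith
  have e2 : β' / (p - 1) = β / (p - 1) * (β' / β) := by field_simp
  have e1 : p * (β' / (p - 1)) = p * (β / (p - 1)) * (β' / β) := by rw [e2]; ring
  have e0 : 2 * (p * (β' / (p - 1)) / q) = 2 * (p * (β / (p - 1)) / q) * (β' / β) := by
    rw [e1]; ring
  refine ⟨?_, ?_⟩
  · rw [Pq, Pq, e0, e1, e2]
    exact lawP_bind_thin hθ (by positivity) (by positivity) hw ht ht1 _ _
  · rw [Qq, Qq, e0, e1, e2]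
    exact lawQ_bind_thin hθ (by positivity) (by positivity) hw ht ht1 _ _

theorem stmt6 (n : ℕ) (hn : 1 ≤ n) (p q β β' : ℝ) (hp : 1 < p) (hq : 1 ≤ q)
    (hβ'0 : 0 < β') (hβ'β : β' ≤ β) (hβ : β ≤ (p - 1) / (p + 1))
    (hr : 2 * p * β / ((p - 1) * q) ≤ 1) :
    (Pq n p β q).bind (fun de =>
        (binomN (β' / β) de.1).bind fun a => (binomN (β' / β) de.2).map fun b => (a, b)) =
      Pq n p β' q ∧
    (Qq n p β q).bind (fun de =>
        (binomN (β' / β) de.1).bind fun a => (binomN (β' / β) de.2).map fun b => (a, b)) =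
      Qq n p β' q :=
  stmt6_general n p q β β' hp hβ'0 hβ'β hβ hr

end
end

section
/- Let n ≥ 1 be an integer, p > 1, β ∈ (0, (p−1)/(p+1)], and q₀, q₁ ≥ 1; set α = β/(p−1), r₀ = pα/q₀, r₁ = pα/q₁, and assume r₀ + r₁ < 1. Let (P, Q) = (P^{r₀,r₁}, Q^{r₀,r₁}) be the pair with parameters n, p, α, r₀, r₁. Then for all natural numbers a, b with a + b ≤ n, with g := (1−α−pα)·(n−a−b)/(1−r₀−r₁), it holds that ℙ[P = (a,b)] · ( α·a/r₀ + pα·b/r₁ + g ) = ℙ[Q = (a,b)] · ( pα·a/r₀ + α·b/r₁ + g ). -/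
open scoped ENNReal
open Finset

noncomputable section

/-! Write `T(a, b)` for the law of `(A, C - A)`: it is the trinomial law with cell probabilities
`r₀, r₁, 1 - r₀ - r₁` and `n - 1` trials. Conditioning on `(Δ₁, Δ₂)`,
`P(a, b) = pα T(a - 1, b) + α T(a, b - 1) + (1 - α - pα) T(a, b)`, and `Q(a, b)` is the same with
`pα` and `α` exchanged. Neighbouring trinomial weights are in fixed ratios:
`(n - a - b) r₀ T(a - 1, b) = (1 - r₀ - r₁) a T(a, b)`, symmetrically in the second coordinate, and
`b r₀ T(a - 1, b) = a r₁ T(a, b - 1)`. After clearing denominators the claim is a linear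
combination of these three relations. -/

namespace PMF

variable {α β : Type*}

theorem map_apply_of_injective {f : α → β} (hf : Function.Injective f) (μ : PMF α) (x : α) :
    μ.map f (f x) = μ x := by
  rw [map_apply, tsum_eq_single x fun y hy => if_neg (hf.ne hy).symm, if_pos rfl]

theorem map_apply_of_notMem_range {f : α → β} (μ : PMF α) {y : β} (hy : y ∉ Set.range f) :
    μ.map f y = 0 := by
  rw [map_apply]
  exact ENNReal.tsum_eq_zero.mpr fun x => if_neg fun h => hy ⟨x, h.symm⟩

theorem bind_map_comm {γ : Type*} (μ : PMF α) (ν : PMF γ) (f : α → γ → β) :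
    (μ.bind fun x => ν.map (f x)) = ν.bind fun d => μ.map (f · d) := by
  simp only [← bind_pure_comp]
  exact bind_comm μ ν _

theorem bind_map_apply_toReal {γ : Type*} [Fintype γ] (μ : PMF α) (ν : PMF γ) (f : α → γ → β)
    (y : β) :
    ((μ.bind fun x => ν.map (f x)) y).toReal = ∑ d, (ν d).toReal * (μ.map (f · d) y).toReal := by
  rw [bind_map_comm, bind_apply, tsum_fintype, ENNReal.toReal_sum]
  · simp only [ENNReal.toReal_mul]
  · exact fun d _ => ENNReal.mul_ne_top (apply_ne_top _ _) (apply_ne_top _ _)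

end PMF

lemma prob_eq_ofReal {x : ℝ} (h : x ≤ 1) : prob x = ENNReal.ofReal x :=
  min_eq_left (ENNReal.ofReal_le_one.mpr h)

lemma binomN_apply_of_lt (θ : ℝ) {m c : ℕ} (hc : m < c) : binomN θ m c = 0 :=
  PMF.map_apply_of_notMem_range _ fun ⟨i, hi⟩ => by have := i.isLt; omega

set_option linter.deprecated false in
lemma binomN_toReal {θ : ℝ} (h0 : 0 ≤ θ) (h1 : θ ≤ 1) (m c : ℕ) :
    (binomN θ m c).toReal = if c ≤ m then m.choose c * θ ^ c * (1 - θ) ^ (m - c) else 0 := by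
  split_ifs with hc
  · obtain ⟨i, rfl⟩ : ∃ i : Fin (m + 1), (i : ℕ) = c := ⟨⟨c, by omega⟩, rfl⟩
    rw [binomN, PMF.map_apply_of_injective Fin.val_injective]
    refine (congrArg ENNReal.toReal (PMF.binomial_apply _ _ _ _)).trans ?_
    simp [prob_eq_ofReal h1, h0, h1]
    ring
  · rw [binomN_apply_of_lt θ (not_le.mp hc), ENNReal.toReal_zero]

def splitLaw (m : ℕ) (θC θA : ℝ) : PMF (ℕ × ℕ) :=
  (binomN θC m).bind fun c => (binomN θA c).map fun a => (a, c - a)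

lemma splitLaw_apply (m : ℕ) (θC θA : ℝ) (a b : ℕ) :
    splitLaw m θC θA (a, b) = binomN θC m (a + b) * binomN θA (a + b) a := by
  have hinj : ∀ c : ℕ, Function.Injective fun a : ℕ => (a, c - a) :=
    fun c x y h => congrArg Prod.fst h
  rw [splitLaw, PMF.bind_apply, tsum_eq_single (a + b)]
  · conv_lhs => rw [show (a, b) = (a, a + b - a) by simp]
    rw [PMF.map_apply_of_injective (hinj _)]
  · intro c hc
    by_cases hab : (a, b) ∈ Set.range fun a : ℕ => (a, c - a)
    · obtain ⟨a', ha'⟩ := hab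
      simp only [Prod.mk.injEq] at ha'
      obtain ⟨rfl, rfl⟩ := ha'
      rw [PMF.map_apply_of_injective (hinj _), binomN_apply_of_lt θA (show c < a' by omega),
        mul_zero]
    · rw [PMF.map_apply_of_notMem_range _ hab, mul_zero]

def trinomialWeight (m : ℕ) (r0 r1 : ℝ) (a b : ℕ) : ℝ :=
  if a + b ≤ m then
    (m.choose (a + b) * (a + b).choose a : ℝ) * r0 ^ a * r1 ^ b * (1 - r0 - r1) ^ (m - (a + b))
  else 0

lemma splitLaw_toReal {r0 r1 : ℝ} (h0 : 0 ≤ r0) (h1 : 0 ≤ r1) (hpos : 0 < r0 + r1)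
    (hle : r0 + r1 ≤ 1) (m a b : ℕ) :
    (splitLaw m (r0 + r1) (r0 / (r0 + r1)) (a, b)).toReal = trinomialWeight m r0 r1 a b := by
  have hA : r0 / (r0 + r1) ≤ 1 := (div_le_one hpos).mpr (by linarith)
  rw [splitLaw_apply, ENNReal.toReal_mul, binomN_toReal hpos.le hle,
    binomN_toReal (div_nonneg h0 hpos.le) hA, trinomialWeight, if_pos (Nat.le_add_right a b)]
  split_ifs
  · rw [Nat.add_sub_cancel_left, one_sub_div hpos.ne', add_sub_cancel_left, div_pow, div_pow,
      pow_add]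
    field_simp
    ring
  · simp

section trinomialWeight

variable (m : ℕ) (r0 r1 : ℝ)

lemma trinomialWeight_comm (a b : ℕ) :
    trinomialWeight m r0 r1 a b = trinomialWeight m r1 r0 b a := by
  rw [trinomialWeight, trinomialWeight, add_comm b a, Nat.choose_symm_add]
  split_ifs <;> ring

lemma trinomialWeight_succ_left (a b : ℕ) :
    ((m : ℝ) - a - b) * r0 * trinomialWeight m r0 r1 a b =
      (1 - r0 - r1) * (a + 1) * trinomialWeight m r0 r1 (a + 1) b := by
  unfold trinomialWeight
  rw [show a + 1 + b = a + b + 1 by ring]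
  by_cases h : a + b + 1 ≤ m
  · rw [if_pos h, if_pos (by omega), show m - (a + b) = m - (a + b + 1) + 1 by omega]
    have hm : ((m - (a + b) : ℕ) : ℝ) = m - a - b := by
      push_cast [Nat.cast_sub (by omega : a + b ≤ m)]; ring
    have e1 := congrArg (Nat.cast : ℕ → ℝ) (Nat.choose_succ_right_eq m (a + b))
    have e2 := congrArg (Nat.cast : ℕ → ℝ) (Nat.add_one_mul_choose_eq (a + b) a)
    push_cast [hm] at e1 e2
    linear_combination (r0 ^ (a + 1) * r1 ^ b * (1 - r0 - r1) ^ (m - (a + b + 1) + 1)) *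
      ((m.choose (a + b + 1) : ℝ) * e2 - ((a + b).choose a : ℝ) * e1)
  · rw [if_neg h]
    rcases (show a + b = m ∨ m < a + b by omega) with hm | hm
    · rw [← hm]; push_cast; ring
    · rw [if_neg (by omega)]; ring

lemma trinomialWeight_succ_right (a b : ℕ) :
    ((m : ℝ) - a - b) * r1 * trinomialWeight m r0 r1 a b =
      (1 - r0 - r1) * (b + 1) * trinomialWeight m r0 r1 a (b + 1) := by
  rw [trinomialWeight_comm, trinomialWeight_comm m r0 r1 a, sub_right_comm _ (a : ℝ),
    trinomialWeight_succ_left, sub_right_comm 1 r1]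

lemma trinomialWeight_succ_swap (a b : ℕ) :
    (b + 1) * r0 * trinomialWeight m r0 r1 a (b + 1) =
      (a + 1) * r1 * trinomialWeight m r0 r1 (a + 1) b := by
  unfold trinomialWeight
  rw [show a + 1 + b = a + (b + 1) by ring]
  split_ifs
  · have e := congrArg (Nat.cast : ℕ → ℝ) (Nat.choose_succ_right_eq (a + (b + 1)) a)
    rw [show a + (b + 1) - a = b + 1 by omega] at e
    push_cast at e
    linear_combination (-(m.choose (a + (b + 1)) : ℝ) * r0 ^ (a + 1) * r1 ^ (b + 1) *
      (1 - r0 - r1) ^ (m - (a + (b + 1)))) * e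
  · ring

end trinomialWeight

lemma triR_toReal {w1 w2 : ℝ} (h1 : 0 ≤ w1) (h2 : 0 ≤ w2) (h : w1 + w2 ≤ 1) (d : Fin 3) :
    (triR w1 w2 d).toReal = ![w1, w2, 1 - w1 - w2] d := by
  have hmin : min (prob w2) (1 - prob w1) = ENNReal.ofReal w2 := by
    rw [prob_eq_ofReal (by linarith), prob_eq_ofReal (by linarith), ← ENNReal.ofReal_one,
      ← ENNReal.ofReal_sub _ h1]
    exact min_eq_left (ENNReal.ofReal_le_ofReal (by linarith))
  fin_cases d
  · simp [triR, prob_eq_ofReal (show w1 ≤ 1 by linarith), h1]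
  · simp [triR, hmin, h2]
  · show (1 - (prob w1 + min (prob w2) (1 - prob w1))).toReal = 1 - w1 - w2
    rw [hmin, prob_eq_ofReal (show w1 ≤ 1 by linarith), ← ENNReal.ofReal_add h1 h2,
      ← ENNReal.ofReal_one, ← ENNReal.ofReal_sub _ (by linarith),
      ENNReal.toReal_ofReal (by linarith), sub_sub]

-- `μ.map succFst (a, b)` is `μ (a - 1, b)`, read as `0` when `a = 0`; similarly for `succSnd`.
def succFst (x : ℕ × ℕ) : ℕ × ℕ := (x.1 + 1, x.2)

def succSnd (x : ℕ × ℕ) : ℕ × ℕ := (x.1, x.2 + 1)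

lemma succFst_injective : Function.Injective succFst :=
  fun x y h => by simpa [succFst, Prod.ext_iff] using h

lemma succSnd_injective : Function.Injective succSnd :=
  fun x y h => by simpa [succSnd, Prod.ext_iff] using h

lemma lawP_eq_bind (m : ℕ) (θC θA w1 w2 : ℝ) :
    lawP m θC θA w1 w2 = (splitLaw m θC θA).bind fun x =>
      (triR w1 w2).map fun d => if d = 0 then succFst x else if d = 1 then succSnd x else x := by
  simp only [lawP, splitLaw, PMF.bind_bind, PMF.bind_map]
  rfl

lemma lawQ_eq_bind (m : ℕ) (θC θA w1 w2 : ℝ) :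
    lawQ m θC θA w1 w2 = (splitLaw m θC θA).bind fun x =>
      (triR w1 w2).map fun d => if d = 0 then succSnd x else if d = 1 then succFst x else x := by
  simp only [lawQ, splitLaw, PMF.bind_bind, PMF.bind_map]
  rfl

lemma lawP_toReal {w1 w2 : ℝ} (h1 : 0 ≤ w1) (h2 : 0 ≤ w2) (h : w1 + w2 ≤ 1) (m : ℕ)
    (θC θA : ℝ) (y : ℕ × ℕ) :
    (lawP m θC θA w1 w2 y).toReal =
      w1 * ((splitLaw m θC θA).map succFst y).toReal +
        w2 * ((splitLaw m θC θA).map succSnd y).toReal +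
          (1 - w1 - w2) * (splitLaw m θC θA y).toReal := by
  rw [lawP_eq_bind, PMF.bind_map_apply_toReal, Fin.sum_univ_three]
  simp only [triR_toReal h1 h2 h, Fin.isValue, Matrix.cons_val_zero, Matrix.cons_val_one,
    Matrix.cons_val_two, Matrix.head_cons, Matrix.tail_cons, ↓reduceIte, Fin.reduceEq]
  rw [show (fun x : ℕ × ℕ => x) = id from rfl, PMF.map_id]

lemma lawQ_toReal {w1 w2 : ℝ} (h1 : 0 ≤ w1) (h2 : 0 ≤ w2) (h : w1 + w2 ≤ 1) (m : ℕ)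
    (θC θA : ℝ) (y : ℕ × ℕ) :
    (lawQ m θC θA w1 w2 y).toReal =
      w2 * ((splitLaw m θC θA).map succFst y).toReal +
        w1 * ((splitLaw m θC θA).map succSnd y).toReal +
          (1 - w1 - w2) * (splitLaw m θC θA y).toReal := by
  rw [lawQ_eq_bind, PMF.bind_map_apply_toReal, Fin.sum_univ_three]
  simp only [triR_toReal h1 h2 h, Fin.isValue, Matrix.cons_val_zero, Matrix.cons_val_one,
    Matrix.cons_val_two, Matrix.head_cons, Matrix.tail_cons, ↓reduceIte, Fin.reduceEq]
  rw [show (fun x : ℕ × ℕ => x) = id from rfl, PMF.map_id]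
  ring

lemma map_succFst_apply_zero (μ : PMF (ℕ × ℕ)) (b : ℕ) : μ.map succFst (0, b) = 0 :=
  PMF.map_apply_of_notMem_range _ fun ⟨x, hx⟩ => by simp [succFst] at hx

lemma map_succSnd_apply_zero (μ : PMF (ℕ × ℕ)) (a : ℕ) : μ.map succSnd (a, 0) = 0 :=
  PMF.map_apply_of_notMem_range _ fun ⟨x, hx⟩ => by simp [succSnd] at hx

section

variable {m : ℕ} {r0 r1 : ℝ} {μ : PMF (ℕ × ℕ)}

lemma mul_map_succFst_toReal (hμ : ∀ a b, (μ (a, b)).toReal = trinomialWeight m r0 r1 a b)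
    (a b : ℕ) :
    ((m : ℝ) + 1 - a - b) * r0 * (μ.map succFst (a, b)).toReal =
      (1 - r0 - r1) * a * (μ (a, b)).toReal := by
  cases a with
  | zero => rw [map_succFst_apply_zero]; simp
  | succ a =>
    have hmap : μ.map succFst (a + 1, b) = μ (a, b) :=
      PMF.map_apply_of_injective succFst_injective μ (a, b)
    rw [hmap, hμ, hμ]
    push_cast
    linear_combination trinomialWeight_succ_left m r0 r1 a b

lemma mul_map_succSnd_toReal (hμ : ∀ a b, (μ (a, b)).toReal = trinomialWeight m r0 r1 a b)
    (a b : ℕ) :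
    ((m : ℝ) + 1 - a - b) * r1 * (μ.map succSnd (a, b)).toReal =
      (1 - r0 - r1) * b * (μ (a, b)).toReal := by
  cases b with
  | zero => rw [map_succSnd_apply_zero]; simp
  | succ b =>
    have hmap : μ.map succSnd (a, b + 1) = μ (a, b) :=
      PMF.map_apply_of_injective succSnd_injective μ (a, b)
    rw [hmap, hμ, hμ]
    push_cast
    linear_combination trinomialWeight_succ_right m r0 r1 a b

lemma mul_map_succFst_toReal_eq_mul_map_succSnd (hμ : ∀ a b, (μ (a, b)).toReal = trinomialWeight m r0 r1 a b)
    (a b : ℕ) :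
    b * r0 * (μ.map succFst (a, b)).toReal = a * r1 * (μ.map succSnd (a, b)).toReal := by
  cases a with
  | zero => rw [map_succFst_apply_zero]; simp
  | succ a =>
    cases b with
    | zero => rw [map_succSnd_apply_zero]; simp
    | succ b =>
      have hFst : μ.map succFst (a + 1, b + 1) = μ (a, b + 1) :=
        PMF.map_apply_of_injective succFst_injective μ (a, b + 1)
      have hSnd : μ.map succSnd (a + 1, b + 1) = μ (a + 1, b) :=
        PMF.map_apply_of_injective succSnd_injective μ (a + 1, b)
      rw [hFst, hSnd, hμ, hμ]
      push_cast
      exact trinomialWeight_succ_swap m r0 r1 a b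

end

theorem stmt13_general (n : ℕ) (hn : 1 ≤ n) (p β q0 q1 α r0 r1 : ℝ) (hp : 1 < p) (hβ0 : 0 < β)
    (hβ : β ≤ (p - 1) / (p + 1)) (hq0 : 1 ≤ q0) (hq1 : 1 ≤ q1)
    (hα : α = β / (p - 1)) (hr0 : r0 = p * α / q0) (hr1 : r1 = p * α / q1)
    (hrsum : r0 + r1 < 1) (a b : ℕ) :
    ((lawP (n - 1) (r0 + r1) (r0 / (r0 + r1)) (p * α) α) (a, b)).toReal *
        (α * a / r0 + p * α * b / r1 +
          (1 - α - p * α) * ((n : ℝ) - a - b) / (1 - r0 - r1)) =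
      ((lawQ (n - 1) (r0 + r1) (r0 / (r0 + r1)) (p * α) α) (a, b)).toReal *
        (p * α * a / r0 + α * b / r1 +
          (1 - α - p * α) * ((n : ℝ) - a - b) / (1 - r0 - r1)) := by
  have hα0 : 0 < α := hα ▸ div_pos hβ0 (by linarith)
  have hpα : 0 < p * α := mul_pos (by linarith) hα0
  have hr0' : 0 < r0 := hr0 ▸ div_pos hpα (by linarith)
  have hr1' : 0 < r1 := hr1 ▸ div_pos hpα (by linarith)
  have hs : 0 < 1 - r0 - r1 := by linarith
  have hw : p * α + α ≤ 1 := by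
    have hβ' := (le_div_iff₀ (by linarith : (0 : ℝ) < p + 1)).mp hβ
    calc p * α + α = (p + 1) * β / (p - 1) := by rw [hα]; ring
      _ ≤ 1 := (div_le_one (by linarith)).mpr (by linarith)
  have hμ := splitLaw_toReal hr0'.le hr1'.le (by linarith) hrsum.le (n - 1)
  have hn' : ((n - 1 : ℕ) : ℝ) + 1 = n := by rw [Nat.cast_sub hn]; ring
  have hL := mul_map_succFst_toReal hμ a b
  have hR := mul_map_succSnd_toReal hμ a b
  have hLR := mul_map_succFst_toReal_eq_mul_map_succSnd hμ a b
  rw [hn'] at hL hR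
  rw [lawP_toReal hpα.le hα0.le hw, lawQ_toReal hpα.le hα0.le hw]
  field_simp
  linear_combination ((p * α) ^ 2 - α ^ 2) * (1 - r0 - r1) * hLR
    + (p * α - α) * (1 - α - p * α) * r1 * hL - (p * α - α) * (1 - α - p * α) * r0 * hR

theorem stmt13 (n : ℕ) (hn : 1 ≤ n) (p β q0 q1 α r0 r1 : ℝ) (hp : 1 < p) (hβ0 : 0 < β)
    (hβ : β ≤ (p - 1) / (p + 1)) (hq0 : 1 ≤ q0) (hq1 : 1 ≤ q1)
    (hα : α = β / (p - 1)) (hr0 : r0 = p * α / q0) (hr1 : r1 = p * α / q1)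
    (hrsum : r0 + r1 < 1) (a b : ℕ) (hab : a + b ≤ n) :
    ((lawP (n - 1) (r0 + r1) (r0 / (r0 + r1)) (p * α) α) (a, b)).toReal *
        (α * a / r0 + p * α * b / r1 +
          (1 - α - p * α) * ((n : ℝ) - a - b) / (1 - r0 - r1)) =
      ((lawQ (n - 1) (r0 + r1) (r0 / (r0 + r1)) (p * α) α) (a, b)).toReal *
        (p * α * a / r0 + α * b / r1 +
          (1 - α - p * α) * ((n : ℝ) - a - b) / (1 - r0 - r1)) :=
  stmt13_general n hn p β q0 q1 α r0 r1 hp hβ0 hβ hq0 hq1 hα hr0 hr1 hrsum a b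

end
end
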